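/- arXiv:1409.2655 — 3 statements merged into one kernel-verified Lean document; each statement's English description precedes it below -/
import Mathlib

section
/- Define R₂(s, b, u) = b·(e^u - u - 1) - s·u for s ≥ 0, b > 0, u ∈ ℝ. If for some u ∈ ℝ and pairs (s₁,b₁), (s₂,b₂) with s_i ≥ 0, b_i > 0 we have R₂(s₂,b₂,u) < R₂(s₁,b₁,u) and u = log(s₁/b₁ + 1), then AMS₂(s₂,b₂) > AMS₂(s₁,b₁), where AMS₂(s,b) = sqrt(2·(b·((1+s/b)log(1+s/b) - s/b))). -/
/-!
`f₂` is the convex conjugate of `u ↦ eᵘ - u - 1`, so `-R₂(s, b, u) ≤ b·f₂(s/b) = AMS₂(s, b)² / 2`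
for every `u` (weak duality), with equality at the maximiser `u = log(1 + s/b)`. Hence at the dual
optimum of `(s₁, b₁)`, decreasing `R₂` pushes `b₂·f₂(s₂/b₂)` strictly above `b₁·f₂(s₁/b₁)`.
-/

open Real

noncomputable def f₂ (t : ℝ) : ℝ := (1 + t) * log (1 + t) - t

noncomputable def R₂ (s b u : ℝ) : ℝ := b * (exp u - u - 1) - s * u

lemma mul_sub_exp_sub_le_f₂ {t : ℝ} (ht : 0 < 1 + t) (u : ℝ) :
    t * u - (exp u - u - 1) ≤ f₂ t := by
  set L := log (1 + t)
  have hexp : exp u = (1 + t) * exp (u - L) := by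
    rw [exp_sub, exp_log ht]; field_simp
  have htangent : (1 + t) * (u - L + 1) ≤ exp u :=
    hexp ▸ mul_le_mul_of_nonneg_left (add_one_le_exp (u - L)) ht.le
  unfold f₂
  linarith

lemma mul_log_sub_exp_sub_eq_f₂ {t : ℝ} (ht : 0 < 1 + t) :
    t * log (1 + t) - (exp (log (1 + t)) - log (1 + t) - 1) = f₂ t := by
  rw [exp_log ht, f₂]
  ring

lemma f₂_nonneg {t : ℝ} (ht : 0 < 1 + t) : 0 ≤ f₂ t := by
  simpa using mul_sub_exp_sub_le_f₂ ht 0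

lemma neg_R₂_eq_mul {b : ℝ} (hb : b ≠ 0) (s u : ℝ) :
    -R₂ s b u = b * (s / b * u - (exp u - u - 1)) := by
  rw [R₂]
  field_simp
  ring

lemma neg_R₂_le {s b : ℝ} (hb : 0 < b) (hsb : 0 < 1 + s / b) (u : ℝ) :
    -R₂ s b u ≤ b * f₂ (s / b) := by
  rw [neg_R₂_eq_mul hb.ne']
  exact mul_le_mul_of_nonneg_left (mul_sub_exp_sub_le_f₂ hsb u) hb.le

lemma neg_R₂_log_eq {s b : ℝ} (hb : 0 < b) (hsb : 0 < 1 + s / b) :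
    -R₂ s b (log (1 + s / b)) = b * f₂ (s / b) := by
  rw [neg_R₂_eq_mul hb.ne', mul_log_sub_exp_sub_eq_f₂ hsb]

/-- Cascade monotonicity for AMS₂: improving the dual objective `R₂` at the
optimal dual point `u = log(s₁/b₁ + 1)` strictly improves `AMS₂`. -/
theorem stmt_7 (s₁ b₁ s₂ b₂ u : ℝ)
    (hs₁ : 0 ≤ s₁) (hb₁ : 0 < b₁) (hs₂ : 0 ≤ s₂) (hb₂ : 0 < b₂)
    (hu : u = Real.log (s₁ / b₁ + 1))
    (hR : b₂ * (Real.exp u - u - 1) - s₂ * u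
        < b₁ * (Real.exp u - u - 1) - s₁ * u) :
    Real.sqrt (2 * (b₂ * ((1 + s₂ / b₂) * Real.log (1 + s₂ / b₂) - s₂ / b₂)))
      > Real.sqrt (2 * (b₁ * ((1 + s₁ / b₁) * Real.log (1 + s₁ / b₁) - s₁ / b₁))) := by
  have ht₁ : 0 < 1 + s₁ / b₁ := by positivity
  have ht₂ : 0 < 1 + s₂ / b₂ := by positivity
  change R₂ s₂ b₂ u < R₂ s₁ b₁ u at hR
  change √(2 * (b₁ * f₂ (s₁ / b₁))) < √(2 * (b₂ * f₂ (s₂ / b₂)))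
  have hopt : -R₂ s₁ b₁ u = b₁ * f₂ (s₁ / b₁) := by
    rw [hu, add_comm]; exact neg_R₂_log_eq hb₁ ht₁
  have hweak := neg_R₂_le hb₂ ht₂ u
  have hpos : 0 ≤ b₁ * f₂ (s₁ / b₁) := mul_nonneg hb₁.le (f₂_nonneg ht₁)
  exact sqrt_lt_sqrt (by linarith) (by linarith)
end

section
/- For s ≥ 0 and b > 0, the function g(b') = b'·((1+s/b')·log(1+s/b') - s/b') is strictly decreasing in b' on (0, ∞) when s > 0. -/
/-!
With `φ x = x log x`, the function is `b ↦ b (φ (1 + s/b) - φ 1) - s`, and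
`b (φ (1 + s/b) - φ 1) = s · slope φ 1 (1 + s/b)`. As `b` grows, `1 + s/b` decreases towards `1`,
so the secant slope of the strictly convex `φ` from `1` decreases strictly.
-/

open Set

theorem StrictConvexOn.strictAntiOn_mul_sub_comp_add_div {S : Set ℝ} {φ : ℝ → ℝ}
    (hφ : StrictConvexOn ℝ S φ) {a s : ℝ} (ha : a ∈ S) (hS : Ioi a ⊆ S) (hs : 0 < s) :
    StrictAntiOn (fun b => b * (φ (a + s / b) - φ a)) (Ioi 0) := by
  have h_slope : ∀ b : ℝ, 0 < b →
      b * (φ (a + s / b) - φ a) = s * ((φ (a + s / b) - φ a) / (a + s / b - a)) := by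
    intro b hb
    rw [add_sub_cancel_left]
    field_simp
  have h_gt : ∀ b : ℝ, 0 < b → a < a + s / b := fun b hb =>
    lt_add_of_pos_right a (div_pos hs hb)
  intro b₁ (hb₁ : 0 < b₁) b₂ (hb₂ : 0 < b₂) hlt
  simp only [h_slope b₁ hb₁, h_slope b₂ hb₂]
  refine mul_lt_mul_of_pos_left ?_ hs
  exact hφ.secant_strict_mono ha (hS (h_gt b₂ hb₂)) (hS (h_gt b₁ hb₁))
    (h_gt b₂ hb₂).ne' (h_gt b₁ hb₁).ne'
    (add_lt_add_right (div_lt_div_of_pos_left hs hb₁ hlt) a)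

/-- For `s > 0`, `b ↦ b·((1+s/b)log(1+s/b) - s/b)` is strictly decreasing on `(0, ∞)`. -/
theorem stmt_13 (s : ℝ) (hs : 0 < s) :
    StrictAntiOn
      (fun b : ℝ => b * ((1 + s / b) * Real.log (1 + s / b) - s / b))
      (Set.Ioi 0) := by
  have h_anti := Real.strictConvexOn_mul_log.strictAntiOn_mul_sub_comp_add_div
    (mem_Ici.mpr zero_le_one) (Ioi_subset_Ici zero_le_one) hs
  have h_eq : ∀ b : ℝ, 0 < b → b * ((1 + s / b) * Real.log (1 + s / b) - s / b)
      = b * ((1 + s / b) * Real.log (1 + s / b) - 1 * Real.log 1) - s := by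
    intro b hb
    rw [Real.log_one, mul_zero, sub_zero, mul_sub, mul_div_cancel₀ s hb.ne']
  intro b₁ hb₁ b₂ hb₂ hlt
  simp only [h_eq b₁ hb₁, h_eq b₂ hb₂]
  exact sub_lt_sub_right (h_anti hb₁ hb₂ hlt) s
end

section
/- For s ≥ 0 and b > 0, suppose (s', b') with s' ≥ 0, b' > 0 satisfies b'·(e^u - u - 1) + (p - s')·u ≤ b·(e^u - u - 1) + (p - s)·u, where u = log(1 + s/b) and p ≥ max(s, s') is any constant. Then b'·f₂(s'/b') ≥ b·f₂(s/b), where f₂(t) = (1+t)log(1+t) - t. -/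
/-!
The function `f₂(t) = (1 + t) log (1 + t) - t` is the convex conjugate of `g(u) = eᵘ - u - 1`,
with the supremum in `f₂(t) = sup_u (t u - g(u))` attained at `u = log (1 + t)`. Scaling by `b`,
`b f₂(s/b) = sup_u (s u - b g(u))`. At `u = log (1 + s/b)` the hypothesis on the classification
objective says `s u - b g(u) ≤ s' u - b' g(u)` (the `p u` terms cancel), and the left side is
`b f₂(s/b)` while the right side is at most `b' f₂(s'/b')`.
-/

open Real

theorem mul_sub_exp_sub_sub_one_le {t : ℝ} (ht : 0 < 1 + t) (u : ℝ) :
    t * u - (exp u - u - 1) ≤ (1 + t) * log (1 + t) - t := by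
  have hexp : exp u = (1 + t) * exp (u - log (1 + t)) := by
    rw [exp_sub, exp_log ht]
    field_simp
  have hlin := mul_le_mul_of_nonneg_left (add_one_le_exp (u - log (1 + t))) ht.le
  linarith

theorem mul_sub_exp_sub_sub_one_log_eq {t : ℝ} (ht : 0 < 1 + t) :
    t * log (1 + t) - (exp (log (1 + t)) - log (1 + t) - 1) = (1 + t) * log (1 + t) - t := by
  rw [exp_log ht]
  ring

section Perspective

variable {s b : ℝ} (hb : 0 < b) (hs : -b < s)
include hb hs

theorem one_add_div_pos : 0 < 1 + s / b := by
  rw [← neg_lt_iff_pos_add', lt_div_iff₀ hb]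
  linarith

theorem mul_sub_mul_exp_sub_sub_one_le (u : ℝ) :
    s * u - b * (exp u - u - 1) ≤ b * ((1 + s / b) * log (1 + s / b) - s / b) := by
  have h := mul_le_mul_of_nonneg_left
    (mul_sub_exp_sub_sub_one_le (one_add_div_pos hb hs) u) hb.le
  rwa [mul_sub, ← mul_assoc, mul_div_cancel₀ s hb.ne'] at h

theorem mul_sub_mul_exp_sub_sub_one_log_eq :
    s * log (1 + s / b) - b * (exp (log (1 + s / b)) - log (1 + s / b) - 1)
      = b * ((1 + s / b) * log (1 + s / b) - s / b) := by
  rw [← mul_sub_exp_sub_sub_one_log_eq (one_add_div_pos hb hs), mul_sub b (s / b * _),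
    ← mul_assoc, mul_div_cancel₀ s hb.ne']

end Perspective

theorem stmt_18_general (s b s' b' p : ℝ)
    (hs : 0 ≤ s) (hb : 0 < b) (hs' : 0 ≤ s') (hb' : 0 < b')
    (hR : b' * (Real.exp (Real.log (1 + s / b)) - Real.log (1 + s / b) - 1)
            + (p - s') * Real.log (1 + s / b)
        ≤ b * (Real.exp (Real.log (1 + s / b)) - Real.log (1 + s / b) - 1)
            + (p - s) * Real.log (1 + s / b)) :
    b * ((1 + s / b) * Real.log (1 + s / b) - s / b)
      ≤ b' * ((1 + s' / b') * Real.log (1 + s' / b') - s' / b') := by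
  set u := log (1 + s / b)
  calc b * ((1 + s / b) * u - s / b) = s * u - b * (exp u - u - 1) :=
        (mul_sub_mul_exp_sub_sub_one_log_eq hb (by linarith)).symm
    _ ≤ s' * u - b' * (exp u - u - 1) := by linarith
    _ ≤ b' * ((1 + s' / b') * log (1 + s' / b') - s' / b') :=
        mul_sub_mul_exp_sub_sub_one_le hb' (by linarith) u

/-- Weak improvement of the weighted classification objective at the optimal
dual point `u = log(1 + s/b)` yields weak improvement in `b·f₂(s/b)`. -/
theorem stmt_18 (s b s' b' p : ℝ)
    (hs : 0 ≤ s) (hb : 0 < b) (hs' : 0 ≤ s') (hb' : 0 < b')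
    (hp : max s s' ≤ p)
    (hR : b' * (Real.exp (Real.log (1 + s / b)) - Real.log (1 + s / b) - 1)
            + (p - s') * Real.log (1 + s / b)
        ≤ b * (Real.exp (Real.log (1 + s / b)) - Real.log (1 + s / b) - 1)
            + (p - s) * Real.log (1 + s / b)) :
    b * ((1 + s / b) * Real.log (1 + s / b) - s / b)
      ≤ b' * ((1 + s' / b') * Real.log (1 + s' / b') - s' / b') :=
  stmt_18_general s b s' b' p hs hb hs' hb' hR
end
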